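/- On (ℂ²)^{⊗4} with factors K1,K2,H1,H2, one has ∫_{SU(2)} |U⊗U⟩⟩⟨⟨U⊗U| dμ(U) = P₀ ⊗ P₀ + (1/3)·P₁ ⊗ P₁, where the first factor of each tensor product acts on K1⊗K2 and the second on H1⊗H2, P₀ is the rank-one orthogonal projector onto the singlet vector (|01⟩ − |10⟩)/√2 in ℂ²⊗ℂ², and P₁ = I₄ − P₀. -/

import Mathlib

/-!
Fix the indices `a, b` on `H1⊗H2`. The `((p, a), (q, b))` entry of the integral is the `(p, q)`
entry of the twirl `N = ∫ (U⊗U) E_ab (U⊗U)† dμ`. Left invariance makes `N` commute with every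
`U⊗U`, and already four elements of `SU(2)` (`diag(i, -i)`, `!![0, i; i, 0]` and rotations about
two axes) cut the commutant of the `U⊗U` down to the span of `1` and `P₀`. The two coefficients
follow from `tr N = tr E_ab` and `tr (P₀ N) = tr (P₀ E_ab)`, which hold because `U⊗U` is unitary
and `(U⊗U) P₀ = det U • P₀ = P₀ (U⊗U)`.
-/

open MeasureTheory Matrix ComplexOrder

noncomputable section

/-- `SU(2)`: the special unitary group of 2×2 complex matrices. -/
abbrev SU2 := Matrix.specialUnitaryGroup (Fin 2) ℂ

instance : MeasurableSpace SU2 := borel SU2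

abbrev Q := Fin 2

abbrev Mat2 := Matrix Q Q ℂ

/-- The rank-one outer product `|v⟩⟨v|`. -/
def outer {n : Type*} (v : n → ℂ) : Matrix n n ℂ :=
  fun a b => v a * (starRingEnd ℂ) (v b)

abbrev Idx2 := Q × Q

abbrev Mat4 := Matrix Idx2 Idx2 ℂ

/-- Index of the four-qubit space `K1⊗K2⊗H1⊗H2`. -/
abbrev Idx4 := Idx2 × Idx2

abbrev Mat16 := Matrix Idx4 Idx4 ℂ

/-- Kronecker product of two qubit operators. -/
def kron2 (A B : Mat2) : Mat4 := fun p q => A p.1 q.1 * B p.2 q.2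

/-- The unnormalized maximally entangled vector `|I⟩⟩ = Σ |ij⟩⊗|ij⟩`. -/
def ketI2 : Idx4 → ℂ := fun p => if p.1 = p.2 then 1 else 0

/-- `W ⊗ I₄`. -/
def WtI2 (W : Mat4) : Mat16 := fun p q => W p.1 q.1 * (if p.2 = q.2 then 1 else 0)

/-- `|W⟩⟩ = (W ⊗ I₄)|I⟩⟩`. -/
def ketW2 (W : Mat4) : Idx4 → ℂ := WtI2 W *ᵥ ketI2

/-- The normalized singlet vector `(|01⟩ − |10⟩)/√2`. -/
def singlet : Idx2 → ℂ := fun p =>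
  if p = (0, 1) then (Real.sqrt 2 : ℂ)⁻¹
  else if p = (1, 0) then -(Real.sqrt 2 : ℂ)⁻¹ else 0

/-- The rank-one orthogonal projector onto the singlet. -/
def P0 : Mat4 := outer singlet

/-- The projector complementary to the singlet projector. -/
def P1 : Mat4 := 1 - P0

/-- The Kronecker product of an operator on `K1⊗K2` with one on `H1⊗H2`. -/
def kron4 (A B : Mat4) : Mat16 := fun p q => A p.1 q.1 * B p.2 q.2

open scoped Kronecker
open ComplexConjugate

lemma Matrix.mul_mul_apply_eq_sum {n R : Type*} [Fintype n] [CommSemiring R]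
    (B M C : Matrix n n R) (p q : n) :
    (B * M * C) p q = ∑ i, ∑ j, B p i * C j q * M i j := by
  simp only [mul_apply, Finset.sum_mul]
  rw [Finset.sum_comm]
  exact Finset.sum_congr rfl fun _ _ => Finset.sum_congr rfl fun _ _ => by ring

lemma Matrix.trace_mul_eq_sum {n R : Type*} [Fintype n] [CommSemiring R] (P M : Matrix n n R) :
    trace (P * M) = ∑ i, ∑ j, P j i * M i j := by
  simp only [trace, diag, mul_apply]
  rw [Finset.sum_comm]

section EntrywiseIntegral

variable {X n : Type*} [MeasurableSpace X] [Fintype n] (μ : Measure X) {F : X → Matrix n n ℂ}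

lemma integral_sum_sum_const_mul (hF : ∀ i j, Integrable (fun x => F x i j) μ)
    (c : n → n → ℂ) :
    ∫ x, ∑ i, ∑ j, c i j * F x i j ∂μ = ∑ i, ∑ j, c i j * ∫ x, F x i j ∂μ := by
  rw [integral_finsetSum _ fun i _ => integrable_finsetSum _ fun j _ => (hF i j).const_mul _]
  refine Finset.sum_congr rfl fun i _ => ?_
  rw [integral_finsetSum _ fun j _ => (hF i j).const_mul _]
  simp_rw [integral_const_mul]

lemma integral_mul_mul_apply (hF : ∀ i j, Integrable (fun x => F x i j) μ)
    (B C : Matrix n n ℂ) (p q : n) :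
    ∫ x, (B * F x * C) p q ∂μ = (B * of (fun i j => ∫ x, F x i j ∂μ) * C) p q := by
  simp only [mul_mul_apply_eq_sum, of_apply]
  exact integral_sum_sum_const_mul μ hF _

lemma integral_trace_mul (hF : ∀ i j, Integrable (fun x => F x i j) μ) (P : Matrix n n ℂ) :
    ∫ x, trace (P * F x) ∂μ = trace (P * of (fun i j => ∫ x, F x i j ∂μ)) := by
  simp only [trace_mul_eq_sum, of_apply]
  exact integral_sum_sum_const_mul μ hF _

end EntrywiseIntegral

section Twirl

variable {G n : Type*} [Group G] [MeasurableSpace G] [Fintype n] [DecidableEq n]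
  (μ : Measure G) {ρ : G →* Matrix n n ℂ}

variable (ρ) in
def twirl (A : Matrix n n ℂ) : Matrix n n ℂ :=
  of fun p q => ∫ g, (ρ g * A * (ρ g)ᴴ) p q ∂μ

variable [TopologicalSpace G] [OpensMeasurableSpace G]

lemma integrable_conj_apply [IsFiniteMeasure μ] (hρ : Continuous ρ)
    (hU : ∀ g, ρ g ∈ unitaryGroup n ℂ) (A : Matrix n n ℂ) (p q : n) :
    Integrable (fun g => (ρ g * A * (ρ g)ᴴ) p q) μ := by
  have hcont : Continuous fun g => (ρ g * A * (ρ g)ᴴ) p q :=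
    ((hρ.matrix_mul continuous_const).matrix_mul hρ.matrix_conjTranspose).matrix_elem p q
  refine .of_bound hcont.aestronglyMeasurable (∑ i, ∑ j, ‖A i j‖) (.of_forall fun g => ?_)
  rw [mul_mul_apply_eq_sum]
  refine (norm_sum_le _ _).trans <| Finset.sum_le_sum fun i _ =>
    (norm_sum_le _ _).trans <| Finset.sum_le_sum fun j _ => ?_
  have h₁ := entry_norm_bound_of_unitary (hU g) p i
  have h₂ := entry_norm_bound_of_unitary (hU g) q j
  rw [norm_mul, norm_mul, conjTranspose_apply, norm_star]
  calc ‖ρ g p i‖ * ‖ρ g q j‖ * ‖A i j‖ ≤ 1 * 1 * ‖A i j‖ := by gcongr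
    _ = ‖A i j‖ := by ring

lemma trace_mul_twirl [IsProbabilityMeasure μ] (hρ : Continuous ρ)
    (hU : ∀ g, ρ g ∈ unitaryGroup n ℂ) {P : Matrix n n ℂ} (hP : ∀ g, Commute P (ρ g))
    (A : Matrix n n ℂ) : trace (P * twirl μ ρ A) = trace (P * A) := by
  rw [twirl, ← integral_trace_mul μ (integrable_conj_apply μ hρ hU A)]
  have h : ∀ g, trace (P * (ρ g * A * (ρ g)ᴴ)) = trace (P * A) := fun g => by
    have hg : (ρ g)ᴴ * ρ g = 1 := Unitary.star_mul_self_of_mem (hU g)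
    rw [← Matrix.mul_assoc, ← Matrix.mul_assoc, (hP g).eq, trace_mul_cycle,
      ← Matrix.mul_assoc (ρ g)ᴴ, hg, Matrix.one_mul]
  simp [h]

variable [IsFiniteMeasure μ] [MeasurableMul G] [μ.IsMulLeftInvariant]

lemma conj_twirl (hρ : Continuous ρ) (hU : ∀ g, ρ g ∈ unitaryGroup n ℂ) (A : Matrix n n ℂ)
    (v : G) : ρ v * twirl μ ρ A * (ρ v)ᴴ = twirl μ ρ A := by
  ext p q
  rw [twirl, ← integral_mul_mul_apply μ (integrable_conj_apply μ hρ hU A)]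
  simp only [of_apply]
  rw [← integral_mul_left_eq_self (fun g => (ρ g * A * (ρ g)ᴴ) p q) v]
  simp only [map_mul, conjTranspose_mul, Matrix.mul_assoc]

lemma commute_twirl (hρ : Continuous ρ) (hU : ∀ g, ρ g ∈ unitaryGroup n ℂ) (A : Matrix n n ℂ)
    (v : G) : Commute (ρ v) (twirl μ ρ A) := by
  have hv : (ρ v)ᴴ * ρ v = 1 := Unitary.star_mul_self_of_mem (hU v)
  calc ρ v * twirl μ ρ A = ρ v * twirl μ ρ A * ((ρ v)ᴴ * ρ v) := by rw [hv, Matrix.mul_one]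
    _ = twirl μ ρ A * ρ v := by rw [← Matrix.mul_assoc, conj_twirl μ hρ hU]

end Twirl

instance : BorelSpace SU2 := ⟨rfl⟩

def tensorSquare : SU2 →* Mat4 where
  toFun U := (U : Mat2) ⊗ₖ (U : Mat2)
  map_one' := by simp
  map_mul' U V := by simp [mul_kronecker_mul]

lemma continuous_tensorSquare : Continuous tensorSquare :=
  continuous_matrix fun _ _ =>
    (continuous_subtype_val.matrix_elem _ _).mul (continuous_subtype_val.matrix_elem _ _)

lemma tensorSquare_mem_unitaryGroup (U : SU2) : tensorSquare U ∈ unitaryGroup Idx2 ℂ :=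
  kronecker_mem_unitary U.2.1 U.2.1

def leviCivita : Mat2 := !![0, 1; -1, 0]

lemma mul_leviCivita_mul_transpose (V : Mat2) : V * leviCivita * Vᵀ = V.det • leviCivita := by
  ext i j
  fin_cases i <;> fin_cases j <;> simp [leviCivita, det_fin_two, mul_apply] <;> ring

lemma singlet_eq_leviCivita (p : Idx2) : singlet p = leviCivita p.1 p.2 / Real.sqrt 2 := by
  obtain ⟨i, j⟩ := p
  fin_cases i <;> fin_cases j <;> simp [singlet, leviCivita, div_eq_inv_mul]

lemma P0_apply (p q : Idx2) : P0 p q = leviCivita p.1 p.2 * leviCivita q.1 q.2 / 2 := by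
  have hconj : ∀ i j, conj (leviCivita i j) = leviCivita i j := fun i j => by
    fin_cases i <;> fin_cases j <;> simp [leviCivita]
  have hsqrt : ((Real.sqrt 2 : ℝ) : ℂ) * (Real.sqrt 2 : ℝ) = 2 := by
    rw [← Complex.ofReal_mul, Real.mul_self_sqrt zero_le_two, Complex.ofReal_ofNat]
  simp only [P0, outer, singlet_eq_leviCivita, map_div₀, hconj, Complex.conj_ofReal]
  rw [div_mul_div_comm, hsqrt]

lemma P0_transpose : P0ᵀ = P0 := by
  ext p q
  rw [transpose_apply, P0_apply, P0_apply, mul_comm]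

lemma trace_P0 : trace P0 = 1 := by
  simp [trace, P0_apply, Fintype.sum_prod_type, leviCivita]
  norm_num

lemma P0_mul_P0 : P0 * P0 = P0 := by
  ext p q
  simp [mul_apply, P0_apply, Fintype.sum_prod_type, leviCivita]
  ring

lemma kronecker_mul_P0 (V : Mat2) : (V ⊗ₖ V) * P0 = V.det • P0 := by
  ext p q
  have h := congrFun₂ (mul_leviCivita_mul_transpose V) p.1 p.2
  rw [mul_mul_apply_eq_sum] at h
  simp only [mul_apply, Fintype.sum_prod_type, kroneckerMap_apply, P0_apply, Matrix.smul_apply,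
    transpose_apply, smul_eq_mul] at h ⊢
  rw [mul_div_assoc, ← mul_assoc, ← h, Finset.sum_mul]
  refine Finset.sum_congr rfl fun i _ => ?_
  rw [Finset.sum_mul]
  exact Finset.sum_congr rfl fun j _ => by ring

lemma P0_mul_kronecker (V : Mat2) : P0 * (V ⊗ₖ V) = V.det • P0 := by
  rw [← transpose_transpose (P0 * _), transpose_mul, ← kroneckerMap_transpose, P0_transpose,
    kronecker_mul_P0, det_transpose, transpose_smul, P0_transpose]

lemma commute_P0_tensorSquare (U : SU2) : Commute P0 (tensorSquare U) := by
  have hdet : (U : Mat2).det = 1 := U.2.2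
  show P0 * ((U : Mat2) ⊗ₖ (U : Mat2)) = ((U : Mat2) ⊗ₖ (U : Mat2)) * P0
  rw [P0_mul_kronecker, kronecker_mul_P0]

lemma mem_specialUnitaryGroup_fin_two {a b : ℂ} (h : Complex.normSq a + Complex.normSq b = 1) :
    !![a, -conj b; b, conj a] ∈ specialUnitaryGroup (Fin 2) ℂ := by
  have h' : conj a * a + conj b * b = 1 := by
    rw [← Complex.normSq_eq_conj_mul_self, ← Complex.normSq_eq_conj_mul_self]
    exact_mod_cast h
  refine mem_specialUnitaryGroup_iff.mpr ⟨mem_unitaryGroup_iff'.mpr ?_, ?_⟩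
  · ext i j
    fin_cases i <;> fin_cases j <;> simp [mul_apply, star_eq_conjTranspose] <;>
      first | linear_combination h' | ring
  · simp [det_fin_two]
    linear_combination h'

def su2Of (a b : ℂ) (h : Complex.normSq a + Complex.normSq b = 1) : SU2 :=
  ⟨_, mem_specialUnitaryGroup_fin_two h⟩

lemma commute_diagonal_apply {n : Type*} [Fintype n] [DecidableEq n] {d : n → ℂ}
    {X : Matrix n n ℂ} (h : Commute (diagonal d) X) {p q : n} (hpq : d p ≠ d q) : X p q = 0 := by
  have e := congrFun₂ h.eq p q
  rw [diagonal_mul, mul_diagonal] at e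
  have e' : (d p - d q) * X p q = 0 := by linear_combination e
  exact (mul_eq_zero.mp e').resolve_left (sub_ne_zero.mpr hpq)

lemma commute_kronecker_apply {V : Mat2} {X : Mat4} (h : Commute (V ⊗ₖ V) X) (p q : Idx2) :
    ∑ r : Idx2, V p.1 r.1 * V p.2 r.2 * X r q = ∑ r : Idx2, X p r * (V r.1 q.1 * V r.2 q.2) :=
  congrFun₂ h.eq p q

lemma exists_eq_smul_one_add_smul_P0 (X : Mat4)
    (hX : ∀ U : SU2, Commute ((U : Mat2) ⊗ₖ (U : Mat2)) X) : ∃ α β : ℂ, X = α • 1 + β • P0 := by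
  have hdiag : (su2Of Complex.I 0 (by simp) : Mat2) = diagonal ![Complex.I, -Complex.I] := by
    ext i j
    fin_cases i <;> fin_cases j <;> simp [su2Of]
  -- `diag(i, -i) ⊗ diag(i, -i) = diag(-1, 1, 1, -1)` separates `|00⟩, |11⟩` from `|01⟩, |10⟩`.
  have hweight := fun {p q} => commute_diagonal_apply (X := X)
    (by rw [← diagonal_kronecker_diagonal, ← hdiag]; exact hX _) (p := p) (q := q)
  have entry := fun a b h => commute_kronecker_apply (hX (su2Of a b h))
  -- `!![0, i; i, 0] ⊗ !![0, i; i, 0]` is minus the operator flipping both qubits.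
  have hflip := entry 0 Complex.I (by simp)
  have f₁ : X (1,1) (1,1) = X (0,0) (0,0) := by
    simpa [Fintype.sum_prod_type, su2Of] using hflip (0,0) (1,1)
  have f₂ : X (1,1) (0,0) = X (0,0) (1,1) := by
    simpa [Fintype.sum_prod_type, su2Of] using hflip (0,0) (0,0)
  have f₃ : X (1,0) (1,0) = X (0,1) (0,1) := by
    simpa [Fintype.sum_prod_type, su2Of] using hflip (0,1) (1,0)
  have f₄ : X (1,0) (0,1) = X (0,1) (1,0) := by
    simpa [Fintype.sum_prod_type, su2Of] using hflip (0,1) (0,1)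
  -- Rotations about the y- and x-axes: their `(00, 01)` entries give
  -- `X₀₁,₀₁ + X₀₁,₁₀ = X₀₀,₀₀ ∓ X₀₀,₁₁`.
  have r₁ := entry (3/5) (4/5) (by simp [Complex.normSq]; norm_num) (0,0) (0,1)
  have r₂ := entry (3/5) (4/5 * Complex.I) (by simp [Complex.normSq]; norm_num) (0,0) (0,1)
  simp (disch := norm_num) [Fintype.sum_prod_type, su2Of, map_ofNat, hweight, f₄] at r₁ r₂
  have hd : X (0,0) (1,1) = 0 := by
    linear_combination -(25/24) * r₁ + (25/24 * Complex.I) * r₂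
      - ((X (0,1) (0,1) + X (0,1) (1,0) - X (0,0) (0,0) - X (0,0) (1,1)) / 2) * Complex.I_mul_I
  have hc : X (0,1) (1,0) = X (0,0) (0,0) - X (0,1) (0,1) := by
    linear_combination (-25/12) * r₁ - hd
  refine ⟨X (0,0) (0,0), 2 * (X (0,1) (0,1) - X (0,0) (0,0)), ?_⟩
  ext ⟨i, j⟩ ⟨k, l⟩
  fin_cases i <;> fin_cases j <;> fin_cases k <;> fin_cases l <;>
    simp (disch := norm_num) [P0_apply, leviCivita, one_apply, hweight, f₁, f₂, f₃, f₄, hd, hc] <;>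
    ring

lemma ketW2_apply (W : Mat4) (p a : Idx2) : ketW2 W (p, a) = W p a := by
  simp [ketW2, WtI2, ketI2, mulVec, dotProduct, Fintype.sum_prod_type]

lemma outer_ketW2_apply (W : Mat4) (p a q b : Idx2) :
    outer (ketW2 W) (p, a) (q, b) = (W * single a b 1 * Wᴴ : Mat4) p q := by
  simp [outer, ketW2_apply, mul_mul_apply_eq_sum, single_apply, ite_and]

/-- `∫ |U⊗U⟩⟩⟨⟨U⊗U| dμ(U) = P₀⊗P₀ + (1/3)·P₁⊗P₁`. -/
theorem average_UU (μ : Measure SU2) [IsProbabilityMeasure μ] [μ.IsMulLeftInvariant] :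
    (fun a b => ∫ U : SU2, outer (ketW2 (kron2 U U)) a b ∂μ : Mat16)
      = kron4 P0 P0 + (1/3 : ℂ) • kron4 P1 P1 := by
  funext ⟨p, a⟩ ⟨q, b⟩
  have hρ := continuous_tensorSquare
  have hU := tensorSquare_mem_unitaryGroup
  obtain ⟨α, β, hN⟩ := exists_eq_smul_one_add_smul_P0 (twirl μ tensorSquare (single a b 1))
    (fun U => commute_twirl μ hρ hU _ U)
  have htrace : 4 * α + β = (1 : Mat4) a b := by
    have h := trace_mul_twirl μ hρ hU (P := 1) (fun U => Commute.one_left _) (single a b 1)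
    rw [hN, trace_mul_single] at h
    simpa [Matrix.mul_add, trace_P0, one_apply, eq_comm, mul_comm] using h
  have hsinglet : α + β = P0 a b := by
    have h := trace_mul_twirl μ hρ hU commute_P0_tensorSquare (single a b 1)
    rw [hN, trace_mul_single] at h
    rw [← congrFun₂ P0_transpose a b]
    simpa [Matrix.mul_add, P0_mul_P0, trace_P0] using h
  calc ∫ U : SU2, outer (ketW2 (kron2 U U)) (p, a) (q, b) ∂μ
      = twirl μ tensorSquare (single a b 1) p q := by simp only [outer_ketW2_apply]; rfl
    _ = _ := by
      rw [hN]
      simp only [kron4, P1, Matrix.add_apply, Matrix.smul_apply, Matrix.sub_apply, smul_eq_mul]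
      linear_combination P0 p q * hsinglet + (((1 : Mat4) p q - P0 p q) / 3) * (htrace - hsinglet)

end
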